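/- Suppose the Fréchet derivative f' is uniformly continuous on C and the stepsizes (γ_k) satisfy the open loop rule. Then the sequence (x_k) generated by the generalized Frank–Wolfe algorithm for the composite objective φ = f + g satisfies φ(x_k) → φ* := inf_{x ∈ C} φ(x) as k → ∞. -/

import Mathlib

/-!
Put `h k = φ (x k) - φ*` and let `D` bound the diameter of `C`. The gradient inequality for `f`
at `x (k+1)` and at `x k`, convexity of `g` along the segment, and the optimality of `xbar k`
against `xstar` give `h (k+1) ≤ (1 - γ k) h k + γ k ε k` with
`ε k = ‖f' (x (k+1)) - f' (x k)‖ D`. Since `‖x (k+1) - x k‖ ≤ γ k D → 0`, uniform continuity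
of `f'` gives `ε k → 0`, and such a recursion with `∑ γ k = ∞` forces `h k → 0`.
-/

open Filter Topology Set

theorem ConvexOn.apply_sub_le_of_hasFDerivAt {X : Type*} [NormedAddCommGroup X]
    [NormedSpace ℝ X] {s : Set X} {f : X → ℝ} {f'x : X →L[ℝ] ℝ} {x y : X}
    (hf : ConvexOn ℝ s f) (hx : x ∈ s) (hy : y ∈ s) (hfx : HasFDerivAt f f'x x) :
    f'x (y - x) ≤ f y - f x := by
  have hline : HasDerivAt (f ∘ AffineMap.lineMap x y) (f'x (y - x)) (0 : ℝ) :=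
    hfx.comp_hasDerivAt_of_eq (0 : ℝ) AffineMap.hasDerivAt_lineMap (by simp)
  simpa [slope_def_field] using (hf.comp_affineMap (AffineMap.lineMap x y)).le_slope_of_hasDerivAt
    (by simpa using hx) (by simpa using hy) zero_lt_one hline

theorem le_mul_exp_neg_sum_of_le_one_sub_mul {a γ : ℕ → ℝ} {N : ℕ} (ha : ∀ k, 0 ≤ a k)
    (hrec : ∀ k ≥ N, a (k + 1) ≤ (1 - γ k) * a k) :
    ∀ n ≥ N, a n ≤ a N * Real.exp (-∑ k ∈ Finset.Ico N n, γ k) := by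
  intro n hn
  induction n, hn using Nat.le_induction with
  | base => simp
  | succ n hn ih =>
    calc a (n + 1) ≤ (1 - γ n) * a n := hrec n hn
      _ ≤ Real.exp (-γ n) * a n := by
          gcongr
          · exact ha n
          · linarith [Real.add_one_le_exp (-γ n)]
      _ ≤ Real.exp (-γ n) * (a N * Real.exp (-∑ k ∈ Finset.Ico N n, γ k)) := by gcongr
      _ = a N * Real.exp (-∑ k ∈ Finset.Ico N (n + 1), γ k) := by
          rw [Finset.sum_Ico_succ_top hn, neg_add, Real.exp_add]; ring

theorem tendsto_zero_of_le_one_sub_mul {a γ : ℕ → ℝ} (ha : ∀ k, 0 ≤ a k)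
    (hrec : ∀ᶠ k in atTop, a (k + 1) ≤ (1 - γ k) * a k)
    (hγ : Tendsto (fun n => ∑ k ∈ Finset.range n, γ k) atTop atTop) :
    Tendsto a atTop (𝓝 0) := by
  obtain ⟨N, hN⟩ := eventually_atTop.mp hrec
  have hsum : Tendsto (fun n => ∑ k ∈ Finset.Ico N n, γ k) atTop atTop := by
    refine (tendsto_atTop_add_const_right _ (-∑ k ∈ Finset.range N, γ k) hγ).congr' ?_
    filter_upwards [eventually_ge_atTop N] with n hn
    rw [Finset.sum_Ico_eq_sub _ hn, sub_eq_add_neg]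
  have hbound : Tendsto (fun n => a N * Real.exp (-∑ k ∈ Finset.Ico N n, γ k)) atTop (𝓝 0) := by
    simpa using (Real.tendsto_exp_neg_atTop_nhds_zero.comp hsum).const_mul (a N)
  refine squeeze_zero' (Eventually.of_forall ha) ?_ hbound
  filter_upwards [eventually_ge_atTop N] with n hn
  exact le_mul_exp_neg_sum_of_le_one_sub_mul ha hN n hn

theorem tendsto_zero_of_le_one_sub_mul_add_mul {h c γ : ℕ → ℝ} (hh : ∀ k, 0 ≤ h k)
    (hγ : ∀ k, γ k ∈ Icc (0 : ℝ) 1)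
    (hrec : ∀ k, h (k + 1) ≤ (1 - γ k) * h k + γ k * c k)
    (hc : Tendsto c atTop (𝓝 0))
    (hγsum : Tendsto (fun n => ∑ k ∈ Finset.range n, γ k) atTop atTop) :
    Tendsto h atTop (𝓝 0) := by
  refine tendsto_order.2 ⟨fun b hb => Eventually.of_forall fun k => hb.trans_le (hh k),
    fun ε hε => ?_⟩
  -- Once `c k ≤ ε / 2`, the excess of `h` over `ε / 2` contracts by the factor `1 - γ k`.
  set a : ℕ → ℝ := fun k => max (h k - ε / 2) 0
  have hcontract : ∀ᶠ k in atTop, a (k + 1) ≤ (1 - γ k) * a k := by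
    filter_upwards [hc.eventually (ge_mem_nhds (half_pos hε))] with k hck
    obtain ⟨hγ0, hγ1⟩ := hγ k
    refine max_le ?_ (mul_nonneg (by linarith) (le_max_right _ _))
    have : (1 - γ k) * (h k - ε / 2) ≤ (1 - γ k) * a k :=
      mul_le_mul_of_nonneg_left (le_max_left _ _) (by linarith)
    nlinarith [hrec k]
  filter_upwards [(tendsto_zero_of_le_one_sub_mul (a := a) (fun k => le_max_right _ _) hcontract
    hγsum).eventually (gt_mem_nhds (half_pos hε))] with k hk
  linarith [le_max_left (h k - ε / 2) 0]

theorem UniformContinuousOn.tendsto_dist_comp {α β ι : Type*} [PseudoMetricSpace α]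
    [PseudoMetricSpace β] {F : α → β} {s : Set α} {l : Filter ι} {u v : ι → α}
    (hF : UniformContinuousOn F s) (hu : ∀ i, u i ∈ s) (hv : ∀ i, v i ∈ s)
    (huv : Tendsto (fun i => dist (u i) (v i)) l (𝓝 0)) :
    Tendsto (fun i => dist (F (u i)) (F (v i))) l (𝓝 0) := by
  have h : Tendsto (fun i => (u i, v i)) l (uniformity α ⊓ 𝓟 (s ×ˢ s)) :=
    tendsto_inf.2 ⟨tendsto_uniformity_iff_dist_tendsto_zero.2 huv,
      tendsto_principal.2 (Eventually.of_forall fun i => ⟨hu i, hv i⟩)⟩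
  exact tendsto_uniformity_iff_dist_tendsto_zero.1 (Tendsto.comp hF h)

theorem convexOn_toReal_of_forall_lt_one {X : Type*} [AddCommGroup X] [Module ℝ X] {C : Set X}
    {g : X → EReal} (hC : Convex ℝ C) (hgtop : ∀ z ∈ C, g z ≠ ⊤) (hgbot : ∀ z ∈ C, g z ≠ ⊥)
    (hg : ∀ z ∈ C, ∀ w ∈ C, ∀ lam : ℝ, 0 < lam → lam < 1 →
      g (lam • z + (1 - lam) • w) ≤ (lam : EReal) * g z + ((1 - lam : ℝ) : EReal) * g w) :
    ConvexOn ℝ C fun z => (g z).toReal := by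
  refine ⟨hC, fun z hz w hw a b ha hb hab => ?_⟩
  obtain rfl : b = 1 - a := by linarith
  rcases ha.eq_or_lt with rfl | ha
  · simp
  rcases hb.eq_or_lt with hb | hb
  · obtain rfl : a = 1 := by linarith
    simp
  have hcoe : ∀ y ∈ C, g y = ((g y).toReal : EReal) := fun y hy =>
    (EReal.coe_toReal (hgtop y hy) (hgbot y hy)).symm
  have key := hg z hz w hw a ha (by linarith)
  rw [hcoe _ (hC hz hw ha.le hb.le (by ring)), hcoe z hz, hcoe w hw] at key
  exact_mod_cast key

section FrankWolfe

variable {X : Type*} [NormedAddCommGroup X] [NormedSpace ℝ X] {C : Set X} {f G : X → ℝ}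
  {f' : X → X →L[ℝ] ℝ}

theorem frankWolfe_gap_step (hC : Convex ℝ C) (hf : ConvexOn ℝ C f)
    (hfd : ∀ z ∈ C, HasFDerivAt f (f' z) z) (hG : ConvexOn ℝ C G)
    {x xbar xstar x' : X} {γ D : ℝ} (hx : x ∈ C) (hxbar : xbar ∈ C) (hxstar : xstar ∈ C)
    (hγ : γ ∈ Icc (0 : ℝ) 1) (hx' : x' = x + γ • (xbar - x))
    (hmin : f' x xbar + G xbar ≤ f' x xstar + G xstar) (hD : ‖xbar - x‖ ≤ D) :
    f x' + G x' - (f xstar + G xstar) ≤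
      (1 - γ) * (f x + G x - (f xstar + G xstar)) + γ * (‖f' x' - f' x‖ * D) := by
  obtain ⟨hγ0, hγ1⟩ := hγ
  have hx'C : x' ∈ C := hx' ▸ hC.add_smul_sub_mem hx hxbar ⟨hγ0, hγ1⟩
  have hf_x' : f x' ≤ f x + γ * f' x' (xbar - x) := by
    have := hf.apply_sub_le_of_hasFDerivAt hx'C hx (hfd x' hx'C)
    rw [show x - x' = -(γ • (xbar - x)) by rw [hx']; abel, map_neg, map_smul,
      smul_eq_mul] at this
    linarith
  have hlip : f' x' (xbar - x) ≤ f' x (xbar - x) + ‖f' x' - f' x‖ * D :=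
    calc f' x' (xbar - x) = f' x (xbar - x) + (f' x' - f' x) (xbar - x) := by simp
      _ ≤ f' x (xbar - x) + ‖f' x' - f' x‖ * ‖xbar - x‖ := by
          gcongr; exact (le_abs_self _).trans ((f' x' - f' x).le_opNorm _)
      _ ≤ f' x (xbar - x) + ‖f' x' - f' x‖ * D := by gcongr
  have hG_x' : G x' ≤ (1 - γ) * G x + γ * G xbar := by
    have hx'_comb : x' = (1 - γ) • x + γ • xbar := by
      rw [hx', smul_sub, sub_smul, one_smul]; abel
    simpa [hx'_comb] using hG.2 hx hxbar (by linarith) hγ0 (by ring)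
  have hf_xstar : f' x (xstar - x) ≤ f xstar - f x :=
    hf.apply_sub_le_of_hasFDerivAt hx hxstar (hfd x hx)
  simp only [map_sub] at hf_x' hlip hf_xstar
  nlinarith [mul_le_mul_of_nonneg_left hlip hγ0, mul_le_mul_of_nonneg_left hmin hγ0,
    mul_le_mul_of_nonneg_left hf_xstar hγ0]

variable {x xbar : ℕ → X} {γ : ℕ → ℝ}

theorem frankWolfe_mem (hC : Convex ℝ C) (hx0 : x 0 ∈ C) (hxbar : ∀ k, xbar k ∈ C)
    (hγ : ∀ k, γ k ∈ Icc (0 : ℝ) 1) (hupdate : ∀ k, x (k + 1) = x k + γ k • (xbar k - x k)) :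
    ∀ k, x k ∈ C
  | 0 => hx0
  | k + 1 => hupdate k ▸ hC.add_smul_sub_mem (frankWolfe_mem hC hx0 hxbar hγ hupdate k)
      (hxbar k) (hγ k)

theorem frankWolfe_tendsto (hC : Convex ℝ C) (hCb : Bornology.IsBounded C)
    (hf : ConvexOn ℝ C f) (hfd : ∀ z ∈ C, HasFDerivAt f (f' z) z)
    (hf' : UniformContinuousOn f' C) (hG : ConvexOn ℝ C G) {xstar : X} (hxstar : xstar ∈ C)
    (hxstar_min : ∀ y ∈ C, f xstar + G xstar ≤ f y + G y)
    (hx0 : x 0 ∈ C) (hxbar : ∀ k, xbar k ∈ C)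
    (hxbar_min : ∀ k, f' (x k) (xbar k) + G (xbar k) ≤ f' (x k) xstar + G xstar)
    (hupdate : ∀ k, x (k + 1) = x k + γ k • (xbar k - x k))
    (hγ : ∀ k, γ k ∈ Icc (0 : ℝ) 1) (hγ0 : Tendsto γ atTop (𝓝 0))
    (hγsum : Tendsto (fun n => ∑ k ∈ Finset.range n, γ k) atTop atTop) :
    Tendsto (fun k => f (x k) + G (x k)) atTop (𝓝 (f xstar + G xstar)) := by
  obtain ⟨D, hD⟩ := Metric.isBounded_iff.1 hCb
  have hxC := frankWolfe_mem hC hx0 hxbar hγ hupdate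
  have hstep : ∀ k, dist (x (k + 1)) (x k) ≤ γ k * D := fun k => by
    rw [dist_eq_norm, hupdate k, add_sub_cancel_left, norm_smul, Real.norm_of_nonneg (hγ k).1]
    exact mul_le_mul_of_nonneg_left (dist_eq_norm (xbar k) (x k) ▸ hD (hxbar k) (hxC k))
      (hγ k).1
  have hf'_step : Tendsto (fun k => ‖f' (x (k + 1)) - f' (x k)‖) atTop (𝓝 0) := by
    simp_rw [← dist_eq_norm]
    refine hf'.tendsto_dist_comp (fun k => hxC (k + 1)) hxC ?_
    refine squeeze_zero (fun k => dist_nonneg) hstep ?_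
    simpa using hγ0.mul_const D
  rw [← tendsto_sub_nhds_zero_iff]
  refine tendsto_zero_of_le_one_sub_mul_add_mul (fun k => sub_nonneg.2 (hxstar_min _ (hxC k)))
    hγ (fun k => ?_) (by simpa using hf'_step.mul_const D) hγsum
  exact frankWolfe_gap_step hC hf hfd hG (hxC k) (hxbar k) hxstar (hγ k) (hupdate k)
    (hxbar_min k) (dist_eq_norm (xbar k) (x k) ▸ hD (hxbar k) (hxC k))

end FrankWolfe

theorem stmt_16_general
    {X : Type*} [NormedAddCommGroup X] [NormedSpace ℝ X]
    (C : Set X)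
    (hCbd : Bornology.IsBounded C) (hCcv : Convex ℝ C)
    (f : X → ℝ) (f' : X → X →L[ℝ] ℝ)
    (hfconv : ConvexOn ℝ Set.univ f)
    (hfderiv : ∀ x : X, HasFDerivAt f (f' x) x)
    (hfUC : UniformContinuousOn f' C)
    (g : X → EReal)
    (hgnebot : ∀ z : X, g z ≠ ⊥)
    (hgconv : ∀ z w : X, ∀ lam : ℝ, 0 < lam → lam < 1 →
      g (lam • z + (1 - lam) • w) ≤ (lam : EReal) * g z + ((1 - lam : ℝ) : EReal) * g w)
    (hgC : ∀ z ∈ C, g z ≠ ⊤)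
    (xstar : X) (hxstarC : xstar ∈ C)
    (hxstarmin : ∀ y ∈ C, (f xstar : EReal) + g xstar ≤ (f y : EReal) + g y)
    (x xbar : ℕ → X) (γ : ℕ → ℝ)
    (hx0 : x 0 ∈ C)
    (hxbarC : ∀ k, xbar k ∈ C)
    (hxbarmin : ∀ k, ∀ y ∈ C,
      (f' (x k) (xbar k) : EReal) + g (xbar k) ≤ (f' (x k) y : EReal) + g y)
    (hupdate : ∀ k, x (k + 1) = x k + γ k • (xbar k - x k))
    (hγ : ∀ k, γ k ∈ Set.Ioc (0 : ℝ) 1)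
    (hγ0 : Tendsto γ atTop (𝓝 0))
    (hγsum : Tendsto (fun n => ∑ k ∈ Finset.range n, γ k) atTop atTop) :
    Tendsto (fun k => (f (x k) : EReal) + g (x k)) atTop
      (𝓝 ((f xstar : EReal) + g xstar)) := by
  set G : X → ℝ := fun z => (g z).toReal
  have hcoe : ∀ (c : ℝ), ∀ z ∈ C, (c : EReal) + g z = ((c + G z : ℝ) : EReal) := fun c z hz => by
    rw [EReal.coe_add, EReal.coe_toReal (hgC z hz) (hgnebot z)]
  have hγIcc : ∀ k, γ k ∈ Icc (0 : ℝ) 1 := fun k => Ioc_subset_Icc_self (hγ k)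
  have hreal := frankWolfe_tendsto hCcv hCbd (hfconv.subset (subset_univ C) hCcv)
    (fun z _ => hfderiv z) hfUC
    (convexOn_toReal_of_forall_lt_one hCcv hgC (fun z _ => hgnebot z) fun z _ w _ => hgconv z w)
    hxstarC
    (fun y hy => by
      simpa only [hcoe _ _ hxstarC, hcoe _ _ hy, EReal.coe_le_coe_iff] using hxstarmin y hy)
    hx0 hxbarC
    (fun k => by
      simpa only [hcoe _ _ hxstarC, hcoe _ _ (hxbarC k), EReal.coe_le_coe_iff]
        using hxbarmin k xstar hxstarC)
    hupdate hγIcc hγ0 hγsum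
  have hxC := frankWolfe_mem hCcv hx0 hxbarC hγIcc hupdate
  rw [hcoe _ _ hxstarC]
  exact (EReal.tendsto_coe.2 hreal).congr fun k => (hcoe _ _ (hxC k)).symm

/-- **Convergence of the generalized Frank–Wolfe algorithm with open loop stepsizes**
(Theorem 5.2). For the composite objective `φ = f + g`, with `f'` uniformly continuous
on `C`, `g` proper lsc convex and finite on `C`, and stepsizes satisfying the open loop
rule, the generalized Frank–Wolfe iterates satisfy `φ(x_k) → φ* = inf_C φ`. -/
theorem stmt_16
    {X : Type*} [NormedAddCommGroup X] [NormedSpace ℝ X] [CompleteSpace X]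
    (C : Set X) (hCne : C.Nonempty) (hCcl : IsClosed C)
    (hCbd : Bornology.IsBounded C) (hCcv : Convex ℝ C)
    (f : X → ℝ) (f' : X → X →L[ℝ] ℝ)
    (hfconv : ConvexOn ℝ Set.univ f)
    (hfderiv : ∀ x : X, HasFDerivAt f (f' x) x)
    (hfUC : UniformContinuousOn f' C)
    (g : X → EReal)
    (hgproper : ∃ z : X, g z ≠ ⊤) (hgnebot : ∀ z : X, g z ≠ ⊥)
    (hglsc : LowerSemicontinuous g)
    (hgconv : ∀ z w : X, ∀ lam : ℝ, 0 < lam → lam < 1 →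
      g (lam • z + (1 - lam) • w) ≤ (lam : EReal) * g z + ((1 - lam : ℝ) : EReal) * g w)
    (hgC : ∀ z ∈ C, g z ≠ ⊤)
    (xstar : X) (hxstarC : xstar ∈ C)
    (hxstarmin : ∀ y ∈ C, (f xstar : EReal) + g xstar ≤ (f y : EReal) + g y)
    (x xbar : ℕ → X) (γ : ℕ → ℝ)
    (hx0 : x 0 ∈ C)
    (hxbarC : ∀ k, xbar k ∈ C)
    (hxbarmin : ∀ k, ∀ y ∈ C,
      (f' (x k) (xbar k) : EReal) + g (xbar k) ≤ (f' (x k) y : EReal) + g y)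
    (hupdate : ∀ k, x (k + 1) = x k + γ k • (xbar k - x k))
    (hγ : ∀ k, γ k ∈ Set.Ioc (0 : ℝ) 1)
    (hγ0 : Tendsto γ atTop (𝓝 0))
    (hγsum : Tendsto (fun n => ∑ k ∈ Finset.range n, γ k) atTop atTop) :
    Tendsto (fun k => (f (x k) : EReal) + g (x k)) atTop
      (𝓝 ((f xstar : EReal) + g xstar)) :=
  stmt_16_general C hCbd hCcv f f' hfconv hfderiv hfUC g hgnebot hgconv hgC xstar hxstarC hxstarmin
    x xbar γ hx0 hxbarC hxbarmin hupdate hγ hγ0 hγsum
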